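/- arXiv:2408.02163 — 2 statements merged into one kernel-verified Lean document; each statement's English description precedes it below -/
import Mathlib

section
/- Let p be an odd prime and a(j) as above. Then the sequence (1/(n·log_p(n))) · ∑_{j=1}^{n} (-1)^j a(j) converges to -1/2 as n → ∞. -/
/-!
Only the degrees `j = 2(p-1)m - 1` contribute more than the alternating `±1`; they are odd
and contribute `-p^(v_p(m)+1)`. Writing `p^(v_p(m)) = ∑_{p^k ∣ m} φ(p^k)` and counting
multiples of `p^k` gives `p ∑_{m ≤ M} p^(v_p(m)) = (p-1) M log_p M + O(M)`, so with
`M ≈ n / (2(p-1))` the sum is `-(p-1) M log_p M + O(n) = -(1/2) n log_p n + o(n log n)`.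
-/

open Filter Real

/-- The order of `π_j L_{K(1)} S⁰` for `j ≥ 1` (at the odd prime `p`):
`p^(k+1)` if `j = 2(p-1)p^k r - 1` with `p ∤ r`, and `1` otherwise. -/
def K1SphereOrder (p j : ℕ) : ℕ :=
  if 2 * (p - 1) ∣ (j + 1) then p ^ (padicValNat p ((j + 1) / (2 * (p - 1))) + 1) else 1

open Finset Asymptotics Topology

theorem abs_sum_Icc_neg_one_pow_le (n : ℕ) : |∑ j ∈ Icc 1 n, (-1 : ℝ) ^ j| ≤ 1 := by
  have h : ∑ j ∈ Icc 1 n, (-1 : ℝ) ^ j = -∑ i : Fin n, (-1 : ℝ) ^ (i : ℕ) := by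
    rw [Fin.sum_univ_eq_sum_range (fun i => (-1 : ℝ) ^ i), ← Ico_add_one_right_eq_Icc,
      sum_Ico_eq_sum_range]
    simp [pow_add]
  rw [h, abs_neg, Fin.sum_neg_one_pow]
  split_ifs <;> norm_num

theorem succ_div_le_self {d : ℕ} (hd : 2 ≤ d) (n : ℕ) : (n + 1) / d ≤ n :=
  (Nat.div_le_div_left hd two_pos).trans (by omega)

theorem sum_Icc_ite_dvd_succ {A : Type*} [AddCommMonoid A] {d : ℕ} (hd : 2 ≤ d) (g : ℕ → A)
    (n : ℕ) :
    ∑ j ∈ Icc 1 n, (if d ∣ j + 1 then g ((j + 1) / d) else 0) =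
      ∑ m ∈ Icc 1 ((n + 1) / d), g m := by
  induction n with
  | zero => simp [Nat.div_eq_of_lt (by omega : 1 < d)]
  | succ n ih =>
    rw [sum_Icc_succ_top (by omega), ih]
    by_cases hdvd : d ∣ n + 1 + 1
    · rw [if_pos hdvd, Nat.succ_div_of_dvd hdvd, sum_Icc_succ_top le_add_self]
    · rw [if_neg hdvd, Nat.succ_div_of_not_dvd hdvd, add_zero]

theorem neg_one_pow_mul_K1SphereOrder (p j : ℕ) :
    (-1 : ℝ) ^ j * K1SphereOrder p j = (-1) ^ j -
      if 2 * (p - 1) ∣ j + 1 then (p : ℝ) ^ (padicValNat p ((j + 1) / (2 * (p - 1))) + 1) - 1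
      else 0 := by
  unfold K1SphereOrder
  split_ifs with hd
  · have hj : Odd j := by
      obtain ⟨c, hc⟩ := (dvd_mul_right 2 (p - 1)).trans hd
      exact Nat.odd_iff.mpr (by omega)
    rw [hj.neg_one_pow]
    push_cast
    ring
  · simp

theorem sum_neg_one_pow_mul_K1SphereOrder {p : ℕ} (hp : 2 ≤ p) (n : ℕ) :
    ∑ j ∈ Icc 1 n, (-1 : ℝ) ^ j * K1SphereOrder p j =
      ∑ j ∈ Icc 1 n, (-1 : ℝ) ^ j + (((n + 1) / (2 * (p - 1)) : ℕ) : ℝ) -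
        p * ∑ m ∈ Icc 1 ((n + 1) / (2 * (p - 1))), (p : ℝ) ^ padicValNat p m := by
  simp only [neg_one_pow_mul_K1SphereOrder, sum_sub_distrib]
  rw [sum_Icc_ite_dvd_succ (by omega) (fun m => (p : ℝ) ^ (padicValNat p m + 1) - 1),
    sum_sub_distrib, sum_const, Nat.card_Icc, mul_sum]
  simp only [pow_succ, nsmul_eq_mul, Nat.add_sub_cancel, mul_one, mul_comm _ (p : ℝ)]
  ring

theorem pow_padicValNat_eq_sum_totient {p : ℕ} (hp : p.Prime) {m K : ℕ} (hm : m ≠ 0)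
    (hK : padicValNat p m ≤ K) :
    p ^ padicValNat p m =
      ∑ k ∈ range (K + 1), if p ^ k ∣ m then Nat.totient (p ^ k) else 0 := by
  have := Fact.mk hp
  have hfilter : {k ∈ range (K + 1) | p ^ k ∣ m} = range (padicValNat p m + 1) := by
    ext k
    simp only [mem_filter, mem_range, padicValNat_dvd_iff_le hm]
    omega
  rw [← sum_filter, hfilter, ← Nat.sum_divisors_prime_pow hp, Nat.sum_totient]

theorem sum_Icc_pow_padicValNat {p : ℕ} (hp : p.Prime) (M : ℕ) :
    ∑ m ∈ Icc 1 M, p ^ padicValNat p m =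
      ∑ k ∈ range (Nat.log p M + 1), Nat.totient (p ^ k) * (M / p ^ k) := by
  have hsplit : ∀ m ∈ Icc 1 M, p ^ padicValNat p m =
      ∑ k ∈ range (Nat.log p M + 1), if p ^ k ∣ m then Nat.totient (p ^ k) else 0 := by
    intro m hm
    have hm : 1 ≤ m ∧ m ≤ M := mem_Icc.mp hm
    refine pow_padicValNat_eq_sum_totient hp (by omega) (Nat.le_log_of_pow_le hp.one_lt ?_)
    exact (Nat.le_of_dvd (by omega) pow_padicValNat_dvd).trans hm.2
  rw [sum_congr rfl hsplit, sum_comm]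
  refine sum_congr rfl fun k _ => ?_
  rw [← sum_filter, sum_const, smul_eq_mul, mul_comm,
    show Icc 1 M = Ioc 0 M from Icc_add_one_left_eq_Ioc 0 M, Nat.Ioc_filter_dvd_card_eq_div]

theorem mul_sum_Icc_pow_padicValNat {p : ℕ} (hp : p.Prime) (M : ℕ) :
    p * ∑ m ∈ Icc 1 M, (p : ℝ) ^ padicValNat p m =
      p * M +
        ∑ k ∈ range (Nat.log p M), ((p : ℝ) - 1) * p ^ (k + 1) * (M / p ^ (k + 1) : ℕ) := by
  have h := congrArg (Nat.cast (R := ℝ)) (sum_Icc_pow_padicValNat hp M)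
  simp only [sum_range_succ', Nat.totient_prime_pow_succ hp] at h
  push_cast [Nat.cast_sub hp.one_le] at h
  rw [h, mul_add, mul_sum]
  simp only [pow_zero, Nat.totient_one, Nat.cast_one, Nat.div_one, one_mul]
  rw [add_comm]
  exact congrArg _ (sum_congr rfl fun k _ => by ring)

theorem sum_Icc_pow_padicValNat_bounds {p : ℕ} (hp : p.Prime) (M : ℕ) :
    p * ∑ m ∈ Icc 1 M, (p : ℝ) ^ padicValNat p m - p * M ≤ (p - 1) * Nat.log p M * M ∧
      (p - 1) * Nat.log p M * M ≤ p * ∑ m ∈ Icc 1 M, (p : ℝ) ^ padicValNat p m := by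
  rw [mul_sum_Icc_pow_padicValNat hp]
  set K := Nat.log p M
  set U := ∑ k ∈ range K, ((p : ℝ) - 1) * p ^ (k + 1) * ((M / p ^ (k + 1) : ℕ) : ℝ)
  have hp1 : (0 : ℝ) ≤ p - 1 := sub_nonneg.mpr (mod_cast hp.one_le)
  have hupper (k : ℕ) :
      ((p : ℝ) - 1) * p ^ (k + 1) * ((M / p ^ (k + 1) : ℕ) : ℝ) ≤ (p - 1) * M := by
    have h : ((M / p ^ (k + 1) * p ^ (k + 1) : ℕ) : ℝ) ≤ M := mod_cast Nat.div_mul_le_self _ _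
    push_cast at h
    nlinarith
  have hlower (k : ℕ) : ((p : ℝ) - 1) * M ≤
      ((p : ℝ) - 1) * p ^ (k + 1) * ((M / p ^ (k + 1) : ℕ) : ℝ) +
        (p ^ (k + 1 + 1) - p ^ (k + 1)) := by
    have h : (M : ℝ) < ((M / p ^ (k + 1) * p ^ (k + 1) + p ^ (k + 1) : ℕ) : ℝ) :=
      mod_cast Nat.lt_div_mul_add (pow_pos hp.pos _)
    push_cast at h
    rw [pow_succ _ (k + 1)]
    nlinarith [mul_le_mul_of_nonneg_left h.le hp1]
  have hpow : (p : ℝ) ^ K ≤ M + 1 := by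
    rcases eq_or_ne M 0 with rfl | hM
    · simp [K]
    · have : (p : ℝ) ^ K ≤ M := mod_cast Nat.pow_log_le_self p hM
      linarith
  have hsum_const : ((p : ℝ) - 1) * K * M = ∑ _k ∈ range K, ((p : ℝ) - 1) * M := by
    rw [sum_const, card_range, nsmul_eq_mul]
    ring
  have hU : U ≤ (p - 1) * K * M :=
    hsum_const ▸ sum_le_sum fun k _ => hupper k
  have hKM : (p - 1) * K * M ≤ U + p * M := by
    calc ((p : ℝ) - 1) * K * M
        ≤ U + ∑ k ∈ range K, ((p : ℝ) ^ (k + 1 + 1) - p ^ (k + 1)) := by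
          rw [hsum_const, ← sum_add_distrib]
          exact sum_le_sum fun k _ => hlower k
      _ = U + p * (p ^ K - 1) := by
          rw [sum_range_sub (fun k => (p : ℝ) ^ (k + 1))]
          ring
      _ ≤ U + p * M := by gcongr; linarith
  constructor <;> linarith

theorem abs_sum_neg_one_pow_mul_K1SphereOrder_add_le {p : ℕ} (hp : p.Prime) (n : ℕ) :
    |∑ j ∈ Icc 1 n, (-1 : ℝ) ^ j * K1SphereOrder p j +
        (p - 1) * Nat.log p ((n + 1) / (2 * (p - 1))) * (((n + 1) / (2 * (p - 1)) : ℕ) : ℝ)| ≤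
      1 + p * (((n + 1) / (2 * (p - 1)) : ℕ) : ℝ) := by
  rw [sum_neg_one_pow_mul_K1SphereOrder hp.two_le]
  obtain ⟨hlower, hupper⟩ := sum_Icc_pow_padicValNat_bounds hp ((n + 1) / (2 * (p - 1)))
  have hE := abs_le.mp (abs_sum_Icc_neg_one_pow_le n)
  have hp1 : (1 : ℝ) ≤ p := mod_cast hp.one_le
  have hM : (0 : ℝ) ≤ (((n + 1) / (2 * (p - 1)) : ℕ) : ℝ) := Nat.cast_nonneg _
  rw [abs_le]
  constructor <;> nlinarith

theorem isBigO_sum_neg_one_pow_mul_K1SphereOrder_add {p : ℕ} (hp : p.Prime) :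
    (fun n : ℕ => ∑ j ∈ Icc 1 n, (-1 : ℝ) ^ j * K1SphereOrder p j +
        (p - 1) * Nat.log p ((n + 1) / (2 * (p - 1))) * (((n + 1) / (2 * (p - 1)) : ℕ) : ℝ))
      =O[atTop] (fun n : ℕ => (n : ℝ)) := by
  refine IsBigO.of_bound (1 + p) ?_
  filter_upwards [eventually_ge_atTop 1] with n hn
  have hMn : (((n + 1) / (2 * (p - 1)) : ℕ) : ℝ) ≤ n :=
    mod_cast succ_div_le_self (by have := hp.two_le; omega) n
  have hn : (1 : ℝ) ≤ n := mod_cast hn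
  rw [Real.norm_eq_abs, Real.norm_natCast]
  calc _ ≤ 1 + p * (((n + 1) / (2 * (p - 1)) : ℕ) : ℝ) :=
        abs_sum_neg_one_pow_mul_K1SphereOrder_add_le hp n
    _ ≤ (1 + p) * n := by nlinarith [(Nat.cast_nonneg p : (0 : ℝ) ≤ p)]

theorem isLittleO_natCast_mul_logb {b : ℝ} (hb : 1 < b) :
    (fun n : ℕ => (n : ℝ)) =o[atTop] (fun n : ℕ => n * logb b n) := by
  have h : (fun _ : ℕ => (1 : ℝ)) =o[atTop] (fun n : ℕ => logb b n) :=
    (isLittleO_one_left_iff ℝ).mpr <| tendsto_norm_atTop_atTop.comp <|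
      (tendsto_logb_atTop hb).comp tendsto_natCast_atTop_atTop
  simpa using (isBigO_refl (fun n : ℕ => (n : ℝ)) atTop).mul_isLittleO h

theorem tendsto_natLog_div_logb {b d : ℕ} (hb : 1 < b) {f : ℕ → ℕ} (hf : ∀ n, f n ≤ n)
    (hf' : ∀ n, n < d * (f n + 1)) :
    Tendsto (fun n => (Nat.log b (f n) : ℝ) / logb b n) atTop (𝓝 1) := by
  have hb' : (1 : ℝ) < b := mod_cast hb
  have hlog : Tendsto (fun n : ℕ => logb b n) atTop atTop :=
    (tendsto_logb_atTop hb').comp tendsto_natCast_atTop_atTop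
  have hlower : Tendsto (fun n : ℕ => 1 - (logb b d + 1) / logb b n) atTop (𝓝 1) := by
    simpa using tendsto_const_nhds.sub (tendsto_const_nhds.div_atTop hlog)
  refine tendsto_of_tendsto_of_tendsto_of_le_of_le' hlower tendsto_const_nhds ?_ ?_
  all_goals filter_upwards [hlog.eventually_gt_atTop 0, eventually_gt_atTop 0] with n hL hn0
  · have hn : n < d * b ^ (Nat.log b (f n) + 1) :=
      (hf' n).trans_le (Nat.mul_le_mul_left d (Nat.lt_pow_succ_log_self hb (f n)))
    have hd : 0 < d := Nat.pos_of_ne_zero (by rintro rfl; simp at hn)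
    have hn' : (n : ℝ) < d * (b : ℝ) ^ (Nat.log b (f n) + 1) := mod_cast hn
    have := logb_lt_logb hb' (mod_cast hn0) hn'
    rw [logb_mul (by positivity) (by positivity), logb_pow, logb_self_eq_one hb'] at this
    rw [one_sub_div hL.ne', div_le_div_iff_of_pos_right hL]
    push_cast at this
    linarith
  · rw [div_le_one hL]
    exact (Nat.cast_le.mpr (Nat.log_mono_right (hf n))).trans (natLog_le_logb n b)

theorem tendsto_succ_div_div_self {d : ℕ} (hd : 0 < d) :
    Tendsto (fun n : ℕ => (((n + 1) / d : ℕ) : ℝ) / n) atTop (𝓝 (1 / d)) := by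
  have hd' : (1 : ℝ) ≤ d := mod_cast hd
  have h0 := tendsto_one_div_atTop_nhds_zero_nat (𝕜 := ℝ)
  have hlower : Tendsto (fun n : ℕ => 1 / (d : ℝ) - 1 / n) atTop (𝓝 (1 / d)) := by
    simpa using tendsto_const_nhds.sub h0
  have hupper : Tendsto (fun n : ℕ => 1 / (d : ℝ) + 1 / n) atTop (𝓝 (1 / d)) := by
    simpa using tendsto_const_nhds.add h0
  refine tendsto_of_tendsto_of_tendsto_of_le_of_le' hlower hupper ?_ ?_
  all_goals filter_upwards [eventually_gt_atTop 0] with n hn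
  all_goals have hn : (0 : ℝ) < n := mod_cast hn
  · have h : (n : ℝ) + 1 < ((((n + 1) / d : ℕ) * d + d : ℕ) : ℝ) :=
      mod_cast Nat.lt_div_mul_add hd
    push_cast at h
    rw [div_sub_div _ _ (by positivity) hn.ne', div_le_div_iff₀ (by positivity) hn]
    nlinarith
  · have h : ((((n + 1) / d : ℕ) * d : ℕ) : ℝ) ≤ n + 1 := mod_cast Nat.div_mul_le_self _ _
    push_cast at h
    rw [div_add_div _ _ (by positivity) hn.ne', div_le_div_iff₀ hn (by positivity)]
    nlinarith

theorem statement5_general (p : ℕ) (hp : p.Prime) :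
    Tendsto (fun n : ℕ =>
      (∑ j ∈ Finset.Icc 1 n, (-1 : ℝ) ^ j * (K1SphereOrder p j : ℝ)) /
        (n * Real.logb p n)) atTop (nhds (-(1 / 2))) := by
  have hd : 2 ≤ 2 * (p - 1) := by have := hp.two_le; omega
  have herror := ((isBigO_sum_neg_one_pow_mul_K1SphereOrder_add hp).trans_isLittleO
    (isLittleO_natCast_mul_logb (b := p) (mod_cast hp.one_lt))).tendsto_div_nhds_zero
  have hK := tendsto_natLog_div_logb hp.one_lt (succ_div_le_self hd)
    fun n => (Nat.lt_succ_self n).trans (Nat.lt_mul_div_succ (n + 1) (by omega))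
  have hM := tendsto_succ_div_div_self (by omega : 0 < 2 * (p - 1))
  have hmain := (tendsto_const_nhds (x := (p : ℝ) - 1)).mul hK |>.mul hM
  have hp1 : (p : ℝ) - 1 ≠ 0 := sub_ne_zero.mpr (mod_cast hp.one_lt.ne')
  convert herror.sub hmain using 1
  · ext n
    ring
  · push_cast [Nat.cast_sub hp.one_le]
    field_simp
    norm_num

/-- `(1/(n·log_p n)) ∑_{j=1}^n (-1)^j |π_j L_{K(1)}S⁰| → -1/2` as `n → ∞`. -/
theorem statement5 (p : ℕ) (hp : p.Prime) (hodd : Odd p) :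
    Tendsto (fun n : ℕ =>
      (∑ j ∈ Finset.Icc 1 n, (-1 : ℝ) ^ j * (K1SphereOrder p j : ℝ)) /
        (n * Real.logb p n)) atTop (nhds (-(1 / 2))) :=
  statement5_general p hp
end

section
/- Let p be an odd prime, i an integer, r ≥ 0 an integer, and f(T) = (T - (1+p)^i + 1)^r. For n ≡ 1 - j (mod p-1) with i ≡ j (mod p-1) and n + i ≠ 1, v_p(f((1+p)^{1-n} - 1)) = r·(1 + v_p(n+i-1)); equivalently, the special value of the r-th power of the sphere's characteristic polynomial has p-adic valuation equal to r times v_p of the order of π_{2(n+i-1)-1} L_{K(1)} S^0. -/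
/-! With `u = 1 + p`, the value in question factors as `u ^ i * (u ^ (1 - n - i) - 1)`. The first
factor is a `p`-adic unit, and lifting the exponent for the odd prime `p` gives
`v_p(u ^ m - 1) = v_p(u - 1) + v_p(m) = 1 + v_p(m)`, first for `m > 0` and then, since
`u ^ (-k) - 1 = -u ^ (-k) * (u ^ k - 1)`, for every `m ≠ 0`. -/

lemma padicValInt_neg {p : ℕ} (z : ℤ) : padicValInt p (-z) = padicValInt p z := by
  simp [padicValInt]

variable {p : ℕ} [Fact p.Prime]

lemma padicValNat_one_add_pow_sub_one (hp : Odd p) {k : ℕ} (hk : k ≠ 0) :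
    padicValNat p ((1 + p) ^ k - 1) = 1 + padicValNat p k := by
  have hpp : p.Prime := Fact.out
  have hndvd : ¬p ∣ 1 + p := fun h => hpp.not_dvd_one (Nat.dvd_add_self_right.mp h)
  have hlte := padicValNat.pow_sub_pow (x := 1 + p) (y := 1) hp
    (by have := hpp.one_lt; omega) (by simp) hndvd hk
  rwa [one_pow, Nat.add_sub_cancel_left, padicValNat.self hpp.one_lt] at hlte

namespace Padic

lemma valuation_neg (x : ℚ_[p]) : (-x).valuation = x.valuation := by
  rcases eq_or_ne x 0 with rfl | hx
  · simp
  have hunit : ((-1 : ℤ) : ℚ_[p]).valuation = 0 := by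
    rw [valuation_intCast, padicValInt_neg, padicValInt.one, Nat.cast_zero]
  push_cast at hunit
  rw [neg_eq_neg_one_mul, valuation_mul (by simp) hx, hunit, zero_add]

lemma valuation_one_add_prime : (1 + (p : ℚ_[p])).valuation = 0 := by
  have hpp : p.Prime := Fact.out
  rw [← Nat.cast_one, ← Nat.cast_add, valuation_natCast, padicValNat.eq_zero_of_not_dvd
    fun h => hpp.not_dvd_one (Nat.dvd_add_self_right.mp h), Nat.cast_zero]

lemma valuation_one_add_prime_pow_sub_one (hp : Odd p) {k : ℕ} (hk : k ≠ 0) :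
    ((1 + (p : ℚ_[p])) ^ k - 1).valuation = 1 + padicValNat p k := by
  have hcast : (1 + (p : ℚ_[p])) ^ k - 1 = (((1 + p) ^ k - 1 : ℕ) : ℚ_[p]) := by
    rw [Nat.cast_sub (Nat.one_le_pow _ _ (by omega))]
    push_cast
    ring
  rw [hcast, valuation_natCast, padicValNat_one_add_pow_sub_one hp hk, Nat.cast_add,
    Nat.cast_one]

lemma valuation_one_add_prime_zpow_sub_one (hp : Odd p) {m : ℤ} (hm : m ≠ 0) :
    ((1 + (p : ℚ_[p])) ^ m - 1).valuation = 1 + padicValInt p m := by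
  obtain ⟨k, rfl | rfl⟩ := Int.eq_nat_or_neg m
  · rw [zpow_natCast, valuation_one_add_prime_pow_sub_one hp (by omega), padicValInt.of_nat]
  have hu : (1 + (p : ℚ_[p])) ≠ 0 := by norm_cast; omega
  have hval := valuation_one_add_prime_pow_sub_one (p := p) hp (k := k) (by omega)
  have hne : (1 + (p : ℚ_[p])) ^ k - 1 ≠ 0 :=
    ne_of_apply_ne valuation (by rw [hval, valuation_zero]; omega)
  have hfac : (1 + (p : ℚ_[p])) ^ (-(k : ℤ)) - 1
      = -((1 + (p : ℚ_[p])) ^ (-(k : ℤ)) * ((1 + (p : ℚ_[p])) ^ k - 1)) := by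
    rw [mul_sub, ← zpow_natCast, ← zpow_add₀ hu, neg_add_cancel, zpow_zero]
    ring
  rw [hfac, valuation_neg, valuation_mul (zpow_ne_zero _ hu) hne, valuation_zpow,
    valuation_one_add_prime, hval, padicValInt_neg, padicValInt.of_nat]
  ring

end Padic

theorem statement17_general (p : ℕ) [Fact p.Prime] (hp : Odd p) (i n : ℤ) (r : ℕ)
    (hni : n + i ≠ 1) :
    (((((1 + (p : ℚ_[p])) ^ (1 - n) - 1) - (1 + (p : ℚ_[p])) ^ i + 1)) ^ r).valuation
      = (r : ℤ) * (1 + (padicValInt p (n + i - 1) : ℤ)) := by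
  have hu : (1 + (p : ℚ_[p])) ≠ 0 := by norm_cast; omega
  set u : ℚ_[p] := 1 + (p : ℚ_[p])
  have hval := Padic.valuation_one_add_prime_zpow_sub_one hp (m := 1 - n - i) (by omega)
  have hne : u ^ (1 - n - i) - 1 ≠ 0 :=
    ne_of_apply_ne Padic.valuation (by rw [hval, Padic.valuation_zero]; omega)
  have hfac : u ^ (1 - n) - 1 - u ^ i + 1 = u ^ i * (u ^ (1 - n - i) - 1) := by
    rw [mul_sub, ← zpow_add₀ hu, add_sub_cancel]
    ring
  rw [hfac, Padic.valuation_pow, Padic.valuation_mul (zpow_ne_zero _ hu) hne,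
    Padic.valuation_zpow, Padic.valuation_one_add_prime, hval,
    show 1 - n - i = -(n + i - 1) by ring, padicValInt_neg]
  ring

/-- Let `p` be an odd prime, `f(T) = (T - (1+p)^i + 1)^r`.  For `n ≡ 1-j (mod p-1)`,
`i ≡ j (mod p-1)` and `n + i ≠ 1`, the special value `f((1+p)^{1-n} - 1)` has
`p`-adic valuation `r·(1 + v_p(n+i-1))`, i.e. `r` times the valuation of
`|π_{2(n+i-1)-1} L_{K(1)} S⁰|`. -/
theorem statement17 (p : ℕ) [Fact p.Prime] (hp : Odd p) (i j n : ℤ) (r : ℕ)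
    (hn : ((p : ℤ) - 1) ∣ (n - (1 - j))) (hi : ((p : ℤ) - 1) ∣ (i - j))
    (hni : n + i ≠ 1) :
    (((((1 + (p : ℚ_[p])) ^ (1 - n) - 1) - (1 + (p : ℚ_[p])) ^ i + 1)) ^ r).valuation
      = (r : ℤ) * (1 + (padicValInt p (n + i - 1) : ℤ)) :=
  statement17_general p hp i n r hni
end
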